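/- The algebras B⁴₂₂ (nonzero products e₁e₁ = e₂, e₁e₂ = e₃, e₁e₃ = e₄, e₂e₁ = e₄) and B⁴₂₃ (nonzero products e₁e₁ = e₂, e₁e₂ = e₃, e₁e₃ = e₄, e₂e₁ = e₃ + e₄, e₂e₂ = e₄, e₃e₁ = e₄) are both nilpotent bicommutative ℂ-algebras, and they are not isomorphic. -/

import Mathlib

noncomputable def mB422 : (Fin 4 → ℂ) →ₗ[ℂ] (Fin 4 → ℂ) →ₗ[ℂ] (Fin 4 → ℂ) :=
  LinearMap.mk₂ ℂ (fun u v => ![0, u 0 * v 0, u 0 * v 1, u 0 * v 2 + u 1 * v 0])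
    (fun x y v => by funext i; fin_cases i <;> simp <;> ring)
    (fun a x v => by funext i; fin_cases i <;> simp <;> ring)
    (fun u x y => by funext i; fin_cases i <;> simp <;> ring)
    (fun u a x => by funext i; fin_cases i <;> simp <;> ring)

noncomputable def mB423 : (Fin 4 → ℂ) →ₗ[ℂ] (Fin 4 → ℂ) →ₗ[ℂ] (Fin 4 → ℂ) :=
  LinearMap.mk₂ ℂ (fun u v =>
      ![0, u 0 * v 0, u 0 * v 1 + u 1 * v 0, u 0 * v 2 + u 1 * v 0 + u 1 * v 1 + u 2 * v 0])
    (fun x y v => by funext i; fin_cases i <;> simp <;> ring)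
    (fun a x v => by funext i; fin_cases i <;> simp <;> ring)
    (fun u x y => by funext i; fin_cases i <;> simp <;> ring)
    (fun u a x => by funext i; fin_cases i <;> simp <;> ring)

noncomputable def mulSub {V : Type*} [AddCommGroup V] [Module ℂ V]
    (μ : V →ₗ[ℂ] V →ₗ[ℂ] V) (S T : Submodule ℂ V) : Submodule ℂ V :=
  Submodule.span ℂ {w | ∃ u ∈ S, ∃ v ∈ T, w = μ u v}

/-- The powers of an algebra: `A¹ = A`, `Aⁿ = Σ_{i+j=n} Aⁱ·Aʲ`. -/
noncomputable def pw {V : Type*} [AddCommGroup V] [Module ℂ V]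
    (μ : V →ₗ[ℂ] V →ₗ[ℂ] V) : ℕ → Submodule ℂ V
  | 0 => ⊤
  | 1 => ⊤
  | (n+2) => ⨆ i : Fin (n+1), mulSub μ (pw μ (i+1)) (pw μ (n+1-i))
  decreasing_by all_goals (have := i.isLt; omega)

/-!
Both products are graded: the coordinate `k` of `u * v` only involves `u i * v j` with
`i + j < k`, so five-fold products vanish. The algebras are told apart by their annihilators: in
`B⁴₂₃` an element annihilating everything from the left (a multiple of `e₄`) also does so from the
right, whereas in `B⁴₂₂` the element `e₃` is a left annihilator with `e₁e₃ = e₄ ≠ 0`. Viewing a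
product as a bilinear map `μ`, the left annihilator is `ker μ` and the right one `ker μ.flip`.
-/

open LinearMap

section Powers

variable {V : Type*} [AddCommGroup V] [Module ℂ V]

lemma mulSub_le {μ : V →ₗ[ℂ] V →ₗ[ℂ] V} {S T U : Submodule ℂ V}
    (h : ∀ u ∈ S, ∀ v ∈ T, μ u v ∈ U) : mulSub μ S T ≤ U :=
  Submodule.span_le.mpr fun _ ⟨u, hu, v, hv, huv⟩ => huv ▸ h u hu v hv

lemma pw_succ_le_of_mul_mem {μ : V →ₗ[ℂ] V →ₗ[ℂ] V} {F : ℕ → Submodule ℂ V}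
    (hmul : ∀ a b, ∀ u ∈ F a, ∀ v ∈ F b, μ u v ∈ F (a + b + 1)) (hF : F 0 = ⊤) (n : ℕ) :
    pw μ (n + 1) ≤ F n := by
  induction n using Nat.strong_induction_on with
  | _ n ih =>
    match n with
    | 0 => rw [pw, hF]
    | m + 1 =>
      rw [pw]
      refine iSup_le fun i => mulSub_le fun u hu v hv => ?_
      have hv' : v ∈ pw μ (m - i + 1) := by rwa [show m - i + 1 = m + 1 - i by omega]
      have hmem := hmul _ _ u (ih i (by omega) hu) v (ih (m - i) (by omega) hv')
      rwa [show (i : ℕ) + (m - i) + 1 = m + 1 by omega] at hmem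

end Powers

def vanishBelow (n k : ℕ) : Submodule ℂ (Fin n → ℂ) :=
  Submodule.pi {i | (i : ℕ) < k} fun _ => ⊥

lemma mem_vanishBelow {n k : ℕ} {u : Fin n → ℂ} :
    u ∈ vanishBelow n k ↔ ∀ i : Fin n, (i : ℕ) < k → u i = 0 := by
  simp [vanishBelow, Submodule.mem_pi]

lemma vanishBelow_zero (n : ℕ) : vanishBelow n 0 = ⊤ :=
  eq_top_iff.mpr fun _ _ => mem_vanishBelow.mpr fun _ h => absurd h (Nat.not_lt_zero _)

lemma vanishBelow_self (n : ℕ) : vanishBelow n n = ⊥ :=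
  eq_bot_iff.mpr fun _ hu => funext fun i => mem_vanishBelow.mp hu i i.isLt

lemma mul_eq_zero_of_mem_vanishBelow {n a b : ℕ} {u v : Fin n → ℂ}
    (hu : u ∈ vanishBelow n a) (hv : v ∈ vanishBelow n b) {i j : Fin n}
    (hij : (i : ℕ) + j < a + b) : u i * v j = 0 := by
  rw [mem_vanishBelow] at hu hv
  rcases Nat.lt_or_ge i a with hi | hi
  · rw [hu i hi, zero_mul]
  · rw [hv j (by omega), mul_zero]

lemma mB422_apply (u v : Fin 4 → ℂ) :
    mB422 u v = ![0, u 0 * v 0, u 0 * v 1, u 0 * v 2 + u 1 * v 0] := rfl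

lemma mB423_apply (u v : Fin 4 → ℂ) :
    mB423 u v = ![0, u 0 * v 0, u 0 * v 1 + u 1 * v 0,
      u 0 * v 2 + u 1 * v 0 + u 1 * v 1 + u 2 * v 0] := rfl

lemma mB422_mem_vanishBelow (a b : ℕ) (u : Fin 4 → ℂ) (hu : u ∈ vanishBelow 4 a)
    (v : Fin 4 → ℂ) (hv : v ∈ vanishBelow 4 b) : mB422 u v ∈ vanishBelow 4 (a + b + 1) := by
  have h := fun {i j : Fin 4} => mul_eq_zero_of_mem_vanishBelow hu hv (i := i) (j := j)
  rw [mem_vanishBelow]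
  rintro ⟨k, hk₄⟩ (hk : k < a + b + 1)
  interval_cases k <;> simp (disch := simp; omega) [mB422_apply, h]

lemma mB423_mem_vanishBelow (a b : ℕ) (u : Fin 4 → ℂ) (hu : u ∈ vanishBelow 4 a)
    (v : Fin 4 → ℂ) (hv : v ∈ vanishBelow 4 b) : mB423 u v ∈ vanishBelow 4 (a + b + 1) := by
  have h := fun {i j : Fin 4} => mul_eq_zero_of_mem_vanishBelow hu hv (i := i) (j := j)
  rw [mem_vanishBelow]
  rintro ⟨k, hk₄⟩ (hk : k < a + b + 1)
  interval_cases k <;> simp (disch := simp; omega) [mB423_apply, h]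

lemma pw_five_mB422 : pw mB422 5 = ⊥ := by
  rw [eq_bot_iff, ← vanishBelow_self]
  exact pw_succ_le_of_mul_mem mB422_mem_vanishBelow (vanishBelow_zero 4) 4

lemma pw_five_mB423 : pw mB423 5 = ⊥ := by
  rw [eq_bot_iff, ← vanishBelow_self]
  exact pw_succ_le_of_mul_mem mB423_mem_vanishBelow (vanishBelow_zero 4) 4

lemma mB422_right_comm (x y z : Fin 4 → ℂ) : mB422 (mB422 x y) z = mB422 (mB422 x z) y := by
  ext i; fin_cases i <;> simp [mB422_apply, mul_right_comm]

lemma mB422_left_comm (x y z : Fin 4 → ℂ) : mB422 x (mB422 y z) = mB422 y (mB422 x z) := by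
  ext i; fin_cases i <;> simp [mB422_apply, mul_left_comm]

lemma mB423_right_comm (x y z : Fin 4 → ℂ) : mB423 (mB423 x y) z = mB423 (mB423 x z) y := by
  ext i; fin_cases i <;> simp [mB423_apply] <;> ring

lemma mB423_left_comm (x y z : Fin 4 → ℂ) : mB423 x (mB423 y z) = mB423 y (mB423 x z) := by
  ext i; fin_cases i <;> simp [mB423_apply] <;> ring

lemma ker_le_ker_flip_of_linearEquiv {R V W : Type*} [CommSemiring R] [AddCommMonoid V]
    [Module R V] [AddCommMonoid W] [Module R W] {μ : V →ₗ[R] V →ₗ[R] V}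
    {ν : W →ₗ[R] W →ₗ[R] W} (φ : V ≃ₗ[R] W) (hφ : ∀ u v, φ (μ u v) = ν (φ u) (φ v))
    (hν : ker ν ≤ ker ν.flip) : ker μ ≤ ker μ.flip := by
  intro x hx
  have hφx : φ x ∈ ker ν := by
    ext w
    simpa [mem_ker.mp hx] using (hφ x (φ.symm w)).symm
  ext u
  apply φ.injective
  simpa [hφ] using LinearMap.congr_fun (mem_ker.mp (hν hφx)) (φ u)

lemma ker_mB423_le_ker_flip : ker mB423 ≤ ker mB423.flip := by
  intro x hx
  have hx₁ := congr_fun (LinearMap.congr_fun (mem_ker.mp hx) (Pi.single 0 1))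
  have h₀ : x 0 = 0 := by simpa [mB423_apply] using hx₁ 1
  have h₁ : x 1 = 0 := by simpa [mB423_apply] using hx₁ 2
  have h₂ : x 2 = 0 := by simpa [mB423_apply, h₁] using hx₁ 3
  ext u i
  fin_cases i <;> simp [mB423_apply, h₀, h₁, h₂]

lemma not_ker_mB422_le_ker_flip : ¬ker mB422 ≤ ker mB422.flip := by
  intro h
  have he₃ : Pi.single 2 1 ∈ ker mB422 := by
    ext v i
    fin_cases i <;> simp [mB422_apply]
  have := congr_fun (LinearMap.congr_fun (mem_ker.mp (h he₃)) (Pi.single 0 1)) 3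
  simp [mB422_apply] at this

/-- `B⁴₂₂` and `B⁴₂₃` are nilpotent bicommutative algebras, and they are not isomorphic. -/
theorem B422_B423_nonisomorphic :
    ((∀ x y z : Fin 4 → ℂ, mB422 (mB422 x y) z = mB422 (mB422 x z) y) ∧
     (∀ x y z : Fin 4 → ℂ, mB422 x (mB422 y z) = mB422 y (mB422 x z)) ∧
     pw mB422 5 = ⊥) ∧
    ((∀ x y z : Fin 4 → ℂ, mB423 (mB423 x y) z = mB423 (mB423 x z) y) ∧
     (∀ x y z : Fin 4 → ℂ, mB423 x (mB423 y z) = mB423 y (mB423 x z)) ∧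
     pw mB423 5 = ⊥) ∧
    ¬∃ φ : (Fin 4 → ℂ) ≃ₗ[ℂ] (Fin 4 → ℂ),
      ∀ u v : Fin 4 → ℂ, φ (mB422 u v) = mB423 (φ u) (φ v) := by
  refine ⟨⟨mB422_right_comm, mB422_left_comm, pw_five_mB422⟩,
    ⟨mB423_right_comm, mB423_left_comm, pw_five_mB423⟩, ?_⟩
  rintro ⟨φ, hφ⟩
  exact not_ker_mB422_le_ker_flip (ker_le_ker_flip_of_linearEquiv φ hφ ker_mB423_le_ker_flip)
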